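/- Directed branching bisimilarity preserves positive good formulas: in an LTS with reflexive silent steps, if p is directed branching bisimilar to q, then every positive good HMLU formula true in p is true in q. -/
import Mathlib


variable {X A : Type*}

/-- Formulas of Hennessy-Milner Logic with Until. `none` is the silent action τ. -/
inductive HMLU (A : Type*) where
  | top : HMLU A
  | neg : HMLU A → HMLU A
  | and : HMLU A → HMLU A → HMLU A
  | dia : HMLU A → Option A → HMLU A → HMLU A

/-- Satisfaction: `p ⊨ δ⟨α⟩ψ` iff there is a τ-path from `p` along which every state
satisfies `δ`, ending in a state that `α`-steps to a state satisfying `ψ`. -/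
def Sat (step : Option A → X → X → Prop) : HMLU A → X → Prop
  | .top, _ => True
  | .neg φ, p => ¬ Sat step φ p
  | .and φ ψ, p => Sat step φ p ∧ Sat step ψ p
  | .dia δ α ψ, p => ∃ p' p'', Sat step δ p ∧
      Relation.ReflTransGen (fun x y => step none x y ∧ Sat step δ y) p p' ∧
      step α p' p'' ∧ Sat step ψ p''

mutual
  /-- Positive HMLU formulas. -/
  inductive Positive : HMLU A → Prop
    | top : Positive .top
    | neg {φ : HMLU A} : Negative φ → Positive (.neg φ)
    | and {φ ψ : HMLU A} : Positive φ → Positive ψ → Positive (.and φ ψ)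
    | dia {δ ψ : HMLU A} {α : Option A} : Positive δ → Positive (.dia δ α ψ)
  /-- Negative HMLU formulas. -/
  inductive Negative : HMLU A → Prop
    | top : Negative .top
    | neg {φ : HMLU A} : Positive φ → Negative (.neg φ)
    | and {φ ψ : HMLU A} : Negative φ → Negative ψ → Negative (.and φ ψ)
end

/-- Good formulas: every diamond subformula has a positive left-hand side. -/
inductive Good : HMLU A → Prop
  | top : Good .top
  | neg {φ : HMLU A} : Good φ → Good (.neg φ)
  | and {φ ψ : HMLU A} : Good φ → Good ψ → Good (.and φ ψ)
  | dia {δ ψ : HMLU A} {α : Option A} : Positive δ → Good δ → Good ψ → Good (.dia δ α ψ)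
/-- `R` is a directed branching bisimulation. -/
def IsDBBisim (step : Option A → X → X → Prop) (R : X → X → Prop) : Prop :=
  ∀ (α : Option A) (p p' q : X), R p q → step α p p' →
    ∃ q' q'', Relation.ReflTransGen (step none) q q' ∧ step α q' q'' ∧
      R p q' ∧ R p' q'' ∧ R q'' p'

/-- Directed branching bisimilarity. -/
def DBBisim (step : Option A → X → X → Prop) (p q : X) : Prop :=
  ∃ R : X → X → Prop, IsDBBisim step R ∧ R p q

/-- Directed branching bisimilarity is itself a directed branching bisimulation. -/
lemma isDBBisim_dbBisim (step : Option A → X → X → Prop) :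
    IsDBBisim step (DBBisim step) := by
  rintro α p p' q ⟨R, hR, hpq⟩ hstep
  obtain ⟨q', q'', hq, hs, h1, h2, h3⟩ := hR α p p' q hpq hstep
  exact ⟨q', q'', hq, hs, ⟨R, hR, h1⟩, ⟨R, hR, h2⟩, ⟨R, hR, h3⟩⟩

/-- Stuttering: any τ-predecessor of a state related to `p` is related to `p`. -/
lemma dbBisim_of_reflTransGen (step : Option A → X → X → Prop) {p x y : X}
    (hxy : Relation.ReflTransGen (step none) x y) (hpy : DBBisim step p y) :
    DBBisim step p x := by
  refine ⟨fun u v => ∃ w, Relation.ReflTransGen (step none) v w ∧ DBBisim step u w,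
    ?_, y, hxy, hpy⟩
  rintro α u u' v ⟨w, hvw, huw⟩ hstep
  obtain ⟨q', q'', hq, hs, h1, h2, h3⟩ := isDBBisim_dbBisim step α u u' w huw hstep
  exact ⟨q', q'', hvw.trans hq, hs,
    ⟨q', Relation.ReflTransGen.refl, h1⟩,
    ⟨q'', Relation.ReflTransGen.refl, h2⟩,
    ⟨u', Relation.ReflTransGen.refl, h3⟩⟩

/-- Lifting a plain τ-path ending in a state related to `a` to a δ-decorated path,
assuming δ holds at `a` and δ is preserved by the bisimilarity. -/
lemma delta_path (step : Option A → X → X → Prop) {δ : HMLU A}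
    (hdelta : ∀ a b : X, DBBisim step a b → Sat step δ a → Sat step δ b)
    {a b b' : X} (hbb' : Relation.ReflTransGen (step none) b b')
    (hab' : DBBisim step a b') (hda : Sat step δ a) :
    Relation.ReflTransGen (fun x y => step none x y ∧ Sat step δ y) b b' := by
  induction hbb' using Relation.ReflTransGen.head_induction_on with
  | refl => exact Relation.ReflTransGen.refl
  | head h h' ih =>
    rename_i u c
    have hac : DBBisim step a c := dbBisim_of_reflTransGen step h' hab'
    exact (ih).head ⟨h, hdelta a c hac hda⟩

/-- Key transfer lemma for the diamond case. -/
lemma dia_transfer (step : Option A → X → X → Prop) {δ ψ : HMLU A} {α : Option A}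
    (hdelta : ∀ a b : X, DBBisim step a b → Sat step δ a → Sat step δ b)
    (hpsi : ∀ a b : X, DBBisim step a b → DBBisim step b a →
      Sat step ψ a → Sat step ψ b)
    {a a₁ a₂ : X}
    (hpath : Relation.ReflTransGen (fun x y => step none x y ∧ Sat step δ y) a a₁)
    (hstep : step α a₁ a₂) (hψ : Sat step ψ a₂) :
    ∀ b, DBBisim step a b → Sat step δ a → Sat step δ a →
      Sat step (HMLU.dia δ α ψ) b := by
  induction hpath using Relation.ReflTransGen.head_induction_on with
  | refl =>
    intro b hab hda _
    obtain ⟨b', b'', hb, hs, h1, h2, h3⟩ :=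
      isDBBisim_dbBisim step α a₁ a₂ b hab hstep
    exact ⟨b', b'', hdelta a₁ b hab hda,
      delta_path step hdelta hb h1 hda, hs, hpsi a₂ b'' h2 h3 hψ⟩
  | head h h' ih =>
    rename_i u c
    intro b hab hda _
    obtain ⟨b', b'', hb, hs, h1, h2, h3⟩ :=
      isDBBisim_dbBisim step none u c b hab h.1
    obtain ⟨c₁, c₂, hdb'', hpathb'', hsb'', hψb''⟩ := ih b'' h2 h.2 h.2
    refine ⟨c₁, c₂, hdelta u b hab hda, ?_, hsb'', hψb''⟩
    exact ((delta_path step hdelta hb h1 hda).tail ⟨hs, hdb''⟩).trans hpathb''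

/-- The three mutually-proved transfer statements, by structural induction. -/
lemma main_transfer (step : Option A → X → X → Prop) (φ : HMLU A) :
    (Positive φ → Good φ → ∀ a b : X, DBBisim step a b →
      Sat step φ a → Sat step φ b) ∧
    (Negative φ → Good φ → ∀ a b : X, DBBisim step a b →
      Sat step φ b → Sat step φ a) ∧
    (Good φ → ∀ a b : X, DBBisim step a b → DBBisim step b a →
      Sat step φ a → Sat step φ b) := by
  induction φ with
  | top => exact ⟨fun _ _ _ _ _ h => h, fun _ _ _ _ _ h => h, fun _ _ _ _ _ h => h⟩
  | neg χ ih =>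
    refine ⟨?_, ?_, ?_⟩
    · rintro hpos hgood a b hab hsat hb
      cases hpos with
      | neg hneg =>
        cases hgood with
        | neg hg => exact hsat (ih.2.1 hneg hg a b hab hb)
    · rintro hneg hgood a b hab hsat ha
      cases hneg with
      | neg hpos =>
        cases hgood with
        | neg hg => exact hsat (ih.1 hpos hg a b hab ha)
    · rintro hgood a b hab hba hsat hb
      cases hgood with
      | neg hg => exact hsat (ih.2.2 hg b a hba hab hb)
  | and χ ρ ih1 ih2 =>
    refine ⟨?_, ?_, ?_⟩
    · rintro hpos hgood a b hab ⟨h1, h2⟩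
      cases hpos with
      | and hp1 hp2 =>
        cases hgood with
        | and hg1 hg2 =>
          exact ⟨ih1.1 hp1 hg1 a b hab h1, ih2.1 hp2 hg2 a b hab h2⟩
    · rintro hneg hgood a b hab ⟨h1, h2⟩
      cases hneg with
      | and hn1 hn2 =>
        cases hgood with
        | and hg1 hg2 =>
          exact ⟨ih1.2.1 hn1 hg1 a b hab h1, ih2.2.1 hn2 hg2 a b hab h2⟩
    · rintro hgood a b hab hba ⟨h1, h2⟩
      cases hgood with
      | and hg1 hg2 =>
        exact ⟨ih1.2.2 hg1 a b hab hba h1, ih2.2.2 hg2 a b hab hba h2⟩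
  | dia δ α ψ ihδ ihψ =>
    refine ⟨?_, ?_, ?_⟩
    · rintro hpos hgood a b hab ⟨a₁, a₂, hda, hpath, hstep, hψ⟩
      cases hgood with
      | dia hpδ hgδ hgψ =>
        exact dia_transfer step (ihδ.1 hpδ hgδ) (ihψ.2.2 hgψ)
          hpath hstep hψ b hab hda hda
    · intro hneg; cases hneg
    · rintro hgood a b hab hba ⟨a₁, a₂, hda, hpath, hstep, hψ⟩
      cases hgood with
      | dia hpδ hgδ hgψ =>
        exact dia_transfer step (ihδ.1 hpδ hgδ) (ihψ.2.2 hgψ)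
          hpath hstep hψ b hab hda hda

theorem dbBisim_preserves_positive_good (step : Option A → X → X → Prop)
    (htau : ∀ p : X, step none p p) (p q : X) (h : DBBisim step p q)
    (φ : HMLU A) (hpos : Positive φ) (hgood : Good φ) (hp : Sat step φ p) :
    Sat step φ q :=
  (main_transfer step φ).1 hpos hgood p q h hp
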